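/- Let A and B be n×n positive semidefinite complex matrices. Then Tr((A^(1/2) − B^(1/2))²) ≤ Tr(|A − B|); equivalently, 2·Tr(A^(1/2) · B^(1/2)) ≥ Tr(A + B − |A − B|). -/

import Mathlib

/-!
Write `S = A^(1/2)`, `T = B^(1/2)` and `Y = S - T = Y⁺ - Y⁻`, so `|Y| = Y⁺ + Y⁻`. Since the trace
of a product of two positive matrices is nonnegative,
`Tr((S + T)|Y|) - Tr(Y²) = 2 Tr(S Y⁻ + T Y⁺) ≥ 0`.
If `U` is the sign of `Y`, then `|Y| = Y U = U Y`, and cyclicity of the trace turns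
`Tr((S + T)|Y|)` into `½ Tr(((S + T) Y + Y (S + T)) U) = Tr((A - B) U)`. Finally
`Tr(H U) ≤ Tr|H|` for Hermitian `H` and `-1 ≤ U ≤ 1`, by pairing `H⁺` with `1 - U` and `H⁻`
with `1 + U`.
-/

open Matrix
open scoped ComplexOrder

/-- Real power `A ^ r` of a Hermitian matrix, defined via the functional calculus:
apply `t ↦ t ^ r` (real power, with `0 ^ 0 = 1`) to the eigenvalues in a spectral
decomposition. -/
noncomputable def hermPow {n : ℕ} {A : Matrix (Fin n) (Fin n) ℂ}
    (hA : A.IsHermitian) (r : ℝ) : Matrix (Fin n) (Fin n) ℂ :=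
  hA.cfc (fun x : ℝ => x ^ r)

/-- The positive semidefinite square root of a positive semidefinite matrix
(the definition Mathlib had in December 2024; it has since been removed). -/
noncomputable def Matrix.PosSemidef.sqrt {n : Type*} [Fintype n] [DecidableEq n]
    {𝕜 : Type*} [RCLike 𝕜] {A : Matrix n n 𝕜} (hA : A.PosSemidef) : Matrix n n 𝕜 :=
  hA.1.eigenvectorUnitary.1 * diagonal ((↑) ∘ (√·) ∘ hA.1.eigenvalues) *
  (star hA.1.eigenvectorUnitary : Matrix n n 𝕜)

/-- The absolute value `|H|` of a Hermitian matrix: the positive semidefinite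
square root of `H ^ 2`. -/
noncomputable def hermAbs {n : ℕ} {H : Matrix (Fin n) (Fin n) ℂ}
    (hH : H.IsHermitian) : Matrix (Fin n) (Fin n) ℂ :=
  Matrix.PosSemidef.sqrt (A := H * H)
    (by simpa only [hH.eq] using Matrix.posSemidef_conjTranspose_mul_self H)

/-- The positive part `H₊ = (|H| + H) / 2` of a Hermitian matrix. -/
noncomputable def hermPosPart {n : ℕ} {H : Matrix (Fin n) (Fin n) ℂ}
    (hH : H.IsHermitian) : Matrix (Fin n) (Fin n) ℂ :=
  (2 : ℂ)⁻¹ • (hermAbs hH + H)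

/-- The negative part `H₋ = (|H| - H) / 2` of a Hermitian matrix. -/
noncomputable def hermNegPart {n : ℕ} {H : Matrix (Fin n) (Fin n) ℂ}
    (hH : H.IsHermitian) : Matrix (Fin n) (Fin n) ℂ :=
  (2 : ℂ)⁻¹ • (hermAbs hH - H)

open scoped MatrixOrder

namespace Matrix

variable {n 𝕜 : Type*} [Fintype n] [DecidableEq n] [RCLike 𝕜]

lemma trace_mul_nonneg {X Y : Matrix n n 𝕜} (hX : 0 ≤ X) (hY : 0 ≤ Y) :
    0 ≤ (X * Y).trace := by
  have h : 0 ≤ (CFC.sqrt X * Y * CFC.sqrt X).trace :=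
    ((IsSelfAdjoint.of_nonneg (CFC.sqrt_nonneg X)).conjugate_nonneg hY).posSemidef.trace_nonneg
  rwa [trace_mul_cycle, CFC.sqrt_mul_sqrt_self X] at h

lemma trace_mul_le_trace_cfcAbs {H U : Matrix n n 𝕜} (hH : IsSelfAdjoint H)
    (hU₁ : -1 ≤ U) (hU₂ : U ≤ 1) : (H * U).trace ≤ (CFC.abs H).trace := by
  have key : CFC.abs H - H * U = H⁺ * (1 - U) + H⁻ * (1 + U) := calc
    _ = (H⁺ + H⁻) - (H⁺ - H⁻) * U := by
      rw [CFC.posPart_add_negPart H hH, CFC.posPart_sub_negPart H hH]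
    _ = _ := by noncomm_ring
  have h₁ := trace_mul_nonneg (CFC.posPart_nonneg H) (sub_nonneg.mpr hU₂)
  have h₂ := trace_mul_nonneg (CFC.negPart_nonneg H) (neg_le_iff_add_nonneg'.mp hU₁)
  rw [← sub_nonneg, ← trace_sub, key, trace_add]
  exact add_nonneg h₁ h₂

lemma trace_sub_sq_le_trace_add_mul_cfcAbs {S T : Matrix n n 𝕜} (hS : 0 ≤ S) (hT : 0 ≤ T) :
    ((S - T) ^ 2).trace ≤ ((S + T) * CFC.abs (S - T)).trace := by
  have hY : IsSelfAdjoint (S - T) := (IsSelfAdjoint.of_nonneg hS).sub (.of_nonneg hT)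
  have key : (S + T) * CFC.abs (S - T) - (S - T) ^ 2
      = 2 • (S * (S - T)⁻ + T * (S - T)⁺) := calc
    _ = (S + T) * ((S - T)⁺ + (S - T)⁻) - (S - T) * ((S - T)⁺ - (S - T)⁻) := by
      rw [CFC.posPart_add_negPart (S - T) hY, CFC.posPart_sub_negPart (S - T) hY, sq]
    _ = _ := by noncomm_ring
  have h₁ := trace_mul_nonneg hS (CFC.negPart_nonneg (S - T))
  have h₂ := trace_mul_nonneg hT (CFC.posPart_nonneg (S - T))
  rw [← sub_nonneg, ← trace_sub, key, trace_smul, trace_add]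
  exact nsmul_nonneg (add_nonneg h₁ h₂) 2

lemma neg_one_le_cfc_sign {Y : Matrix n n 𝕜} (hY : IsSelfAdjoint Y) :
    -1 ≤ cfc (fun x : ℝ => (SignType.sign x : ℝ)) Y := by
  simpa using algebraMap_le_cfc _ (-1 : ℝ) Y (fun x _ => by cases SignType.sign x <;> norm_num)
    (finite_real_spectrum.continuousOn _) hY

lemma cfc_sign_le_one (Y : Matrix n n 𝕜) : cfc (fun x : ℝ => (SignType.sign x : ℝ)) Y ≤ 1 :=
  cfc_le_one _ Y fun x _ => by cases SignType.sign x <;> norm_num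

lemma mul_cfc_sign {Y : Matrix n n 𝕜} (hY : IsSelfAdjoint Y) :
    Y * cfc (fun x : ℝ => (SignType.sign x : ℝ)) Y = CFC.abs Y := calc
  _ = cfc (fun x : ℝ => x) Y * cfc (fun x : ℝ => (SignType.sign x : ℝ)) Y := by
    rw [cfc_id' ℝ Y hY]
  _ = cfc (fun x : ℝ => x * SignType.sign x) Y :=
    (cfc_mul _ _ Y continuousOn_id (finite_real_spectrum.continuousOn _)).symm
  _ = CFC.abs Y := by
    rw [CFC.abs_eq_cfc_norm Y hY]
    exact cfc_congr fun x _ => by rw [self_mul_sign, Real.norm_eq_abs]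

lemma cfc_sign_mul {Y : Matrix n n 𝕜} (hY : IsSelfAdjoint Y) :
    cfc (fun x : ℝ => (SignType.sign x : ℝ)) Y * Y = CFC.abs Y := by
  have h := (cfc_commute_cfc (fun x : ℝ => x) (fun x : ℝ => (SignType.sign x : ℝ)) Y).eq
  rw [cfc_id' ℝ Y hY] at h
  rw [← h, mul_cfc_sign hY]

lemma trace_add_mul_cfcAbs_sub_le_trace_cfcAbs {S T : Matrix n n 𝕜} (hS : IsSelfAdjoint S)
    (hT : IsSelfAdjoint T) :
    ((S + T) * CFC.abs (S - T)).trace ≤ (CFC.abs (S * S - T * T)).trace := by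
  set U := cfc (fun x : ℝ => (SignType.sign x : ℝ)) (S - T)
  have hY : IsSelfAdjoint (S - T) := hS.sub hT
  have hH : IsSelfAdjoint (S * S - T * T) := by simpa only [sq] using (hS.pow 2).sub (hT.pow 2)
  have key : (2 : 𝕜) * ((S + T) * CFC.abs (S - T)).trace
      = (2 : 𝕜) * ((S * S - T * T) * U).trace := calc
    _ = ((S + T) * ((S - T) * U)).trace + ((S + T) * (U * (S - T))).trace := by
      rw [mul_cfc_sign hY, cfc_sign_mul hY, two_mul]
    _ = (((S + T) * (S - T) + (S - T) * (S + T)) * U).trace := by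
      rw [← mul_assoc, ← mul_assoc, trace_mul_cycle (S + T) U, add_mul _ _ U, trace_add]
    _ = _ := by
      have : (S + T) * (S - T) + (S - T) * (S + T) = (2 : 𝕜) • (S * S - T * T) := by
        rw [two_smul]; noncomm_ring
      rw [this, smul_mul_assoc, trace_smul, smul_eq_mul]
  rw [mul_left_cancel₀ two_ne_zero key]
  exact trace_mul_le_trace_cfcAbs hH (neg_one_le_cfc_sign hY) (cfc_sign_le_one _)

lemma trace_sub_sq_le_trace_cfcAbs_mul_self_sub {S T : Matrix n n 𝕜} (hS : 0 ≤ S) (hT : 0 ≤ T) :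
    ((S - T) ^ 2).trace ≤ (CFC.abs (S * S - T * T)).trace :=
  (trace_sub_sq_le_trace_add_mul_cfcAbs hS hT).trans
    (trace_add_mul_cfcAbs_sub_le_trace_cfcAbs (.of_nonneg hS) (.of_nonneg hT))

lemma trace_sub_sq (S T : Matrix n n 𝕜) :
    ((S - T) ^ 2).trace = (S * S + T * T).trace - 2 * (S * T).trace := by
  rw [show (S - T) ^ 2 = S * S + T * T - (S * T + T * S) by noncomm_ring, trace_sub, trace_add,
    trace_add, trace_mul_comm T S, two_mul]

lemma PosSemidef.sqrt_eq_cfcSqrt {A : Matrix n n 𝕜} (hA : A.PosSemidef) :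
    hA.sqrt = CFC.sqrt A := by
  rw [CFC.sqrt_eq_real_sqrt A hA.nonneg, cfcₙ_eq_cfc, hA.1.cfc_eq, IsHermitian.cfc,
    Unitary.conjStarAlgAut_apply]
  rfl

end Matrix

lemma hermAbs_eq_cfcAbs {n : ℕ} {H : Matrix (Fin n) (Fin n) ℂ} (hH : H.IsHermitian) :
    hermAbs hH = CFC.abs H := by
  rw [hermAbs, PosSemidef.sqrt_eq_cfcSqrt, CFC.abs, hH.star_eq]

/-- **Powers–Størmer inequality for matrices.** For positive semidefinite complex
matrices `A, B`, `Tr((A^(1/2) - B^(1/2))²) ≤ Tr(|A - B|)`; equivalently,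
`2 Tr(A^(1/2) B^(1/2)) ≥ Tr(A + B - |A - B|)`. -/
theorem powers_stormer
    {n : ℕ} {A B : Matrix (Fin n) (Fin n) ℂ}
    (hA : A.PosSemidef) (hB : B.PosSemidef) :
    ((hA.sqrt - hB.sqrt) ^ 2).trace ≤ (hermAbs (hA.1.sub hB.1)).trace
      ∧ (A + B - hermAbs (hA.1.sub hB.1)).trace ≤ 2 * (hA.sqrt * hB.sqrt).trace := by
  rw [hA.sqrt_eq_cfcSqrt, hB.sqrt_eq_cfcSqrt, hermAbs_eq_cfcAbs]
  set S := CFC.sqrt A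
  set T := CFC.sqrt B
  have hSS : S * S = A := CFC.sqrt_mul_sqrt_self A hA.nonneg
  have hTT : T * T = B := CFC.sqrt_mul_sqrt_self B hB.nonneg
  have main : ((S - T) ^ 2).trace ≤ (CFC.abs (A - B)).trace := by
    rw [← hSS, ← hTT]
    exact trace_sub_sq_le_trace_cfcAbs_mul_self_sub (CFC.sqrt_nonneg A) (CFC.sqrt_nonneg B)
  refine ⟨main, ?_⟩
  rw [trace_sub, sub_le_comm]
  calc (A + B).trace - 2 * (S * T).trace = ((S - T) ^ 2).trace := by
        rw [trace_sub_sq, hSS, hTT]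
    _ ≤ _ := main
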